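/- arXiv:1906.03179 — 2 statements merged into one kernel-verified Lean document; each statement's English description precedes it below -/
import Mathlib

section
/- Let C be an N×N symmetric {0,1}-matrix with row sums at most R ≥ 1, let 0 < α with αR < 1, and define δ_z(x) := Σ_{k=0}^∞ α^k (C^k)_{x,z}. Fix x, y ∈ {1,...,N} and d ∈ ℕ, and suppose that (C^k)_{x,z} (C^r)_{y,z} = 0 for all z whenever k + r < d. Then there exists a constant c* depending only on αR such that Σ_{z=1}^N δ_z(x) δ_z(y) ≤ c* · (√(αR))^d. -/
lemma stmt9_pow_nonneg {N : ℕ} (C : Matrix (Fin N) (Fin N) ℝ)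
    (h : ∀ i j, 0 ≤ C i j) (k : ℕ) : ∀ i j, 0 ≤ (C ^ k) i j := by
  induction k with
  | zero =>
    intro i j
    rw [pow_zero]
    by_cases hij : i = j <;> simp [Matrix.one_apply, hij]
  | succ n ih =>
    intro i j
    rw [pow_succ, Matrix.mul_apply]
    exact Finset.sum_nonneg fun w _ => mul_nonneg (ih i w) (h w j)

lemma stmt9_pow_rowsum {N : ℕ} (C : Matrix (Fin N) (Fin N) ℝ) (R : ℝ)
    (h : ∀ i j, 0 ≤ C i j) (hR : 0 ≤ R) (hrow : ∀ i, ∑ j, C i j ≤ R) (k : ℕ) :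
    ∀ i, ∑ j, (C ^ k) i j ≤ R ^ k := by
  induction k with
  | zero =>
    intro i
    simp [Matrix.one_apply]
  | succ n ih =>
    intro i
    calc ∑ j, (C ^ (n + 1)) i j = ∑ j, ∑ w, (C ^ n) i w * C w j := by
          simp [pow_succ, Matrix.mul_apply]
      _ = ∑ w, (C ^ n) i w * ∑ j, C w j := by
          rw [Finset.sum_comm]; simp [Finset.mul_sum]
      _ ≤ ∑ w, (C ^ n) i w * R := Finset.sum_le_sum fun w _ =>
          mul_le_mul_of_nonneg_left (hrow w) (stmt9_pow_nonneg C h n i w)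
      _ = (∑ w, (C ^ n) i w) * R := by rw [Finset.sum_mul]
      _ ≤ R ^ n * R := mul_le_mul_of_nonneg_right (ih i) hR
      _ = R ^ (n + 1) := (pow_succ R n).symm

theorem stmt9 (q : ℝ) (hq0 : 0 < q) (hq1 : q < 1) :
    ∃ c > (0 : ℝ), ∀ (N : ℕ) (C : Matrix (Fin N) (Fin N) ℝ) (R α : ℝ)
      (x y : Fin N) (d : ℕ),
      C.IsSymm → (∀ i j, C i j = 0 ∨ C i j = 1) →
      1 ≤ R → (∀ i, ∑ j, C i j ≤ R) →
      0 < α → α * R = q →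
      (∀ k r : ℕ, k + r < d → ∀ z, (C ^ k) x z * (C ^ r) y z = 0) →
      (∑ z, (∑' k : ℕ, α ^ k * (C ^ k) x z) * (∑' k : ℕ, α ^ k * (C ^ k) y z)) ≤
        c * Real.sqrt q ^ d := by
  set s := Real.sqrt q with hs
  have hs0 : 0 < s := Real.sqrt_pos.mpr hq0
  have hs1 : s < 1 := by
    rw [hs, show (1 : ℝ) = Real.sqrt 1 by simp]
    exact Real.sqrt_lt_sqrt hq0.le hq1
  have hssq : s ^ 2 = q := Real.sq_sqrt hq0.le
  have hs1' : 0 < 1 - s := by linarith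
  refine ⟨(1 - s)⁻¹ ^ 2, by positivity, ?_⟩
  intro N C R α x y d _ h01 hR1 hrow hα hαR h0
  have hR0 : (0 : ℝ) ≤ R := le_trans zero_le_one hR1
  have hCnn : ∀ i j, 0 ≤ C i j := by
    intro i j; rcases h01 i j with h | h <;> simp [h]
  have hknn : ∀ k (i j : Fin N), 0 ≤ (C ^ k) i j := fun k => stmt9_pow_nonneg C hCnn k
  have hkrow : ∀ k (i : Fin N), ∑ j, (C ^ k) i j ≤ R ^ k :=
    fun k => stmt9_pow_rowsum C R hCnn hR0 hrow k
  have hent : ∀ k (i j : Fin N), (C ^ k) i j ≤ R ^ k := by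
    intro k i j
    calc (C ^ k) i j ≤ ∑ j', (C ^ k) i j' :=
          Finset.single_le_sum (fun j' _ => hknn k i j') (Finset.mem_univ j)
      _ ≤ R ^ k := hkrow k i
  -- f, g
  set f : ℕ → Fin N → ℝ := fun k z => α ^ k * (C ^ k) x z with hf
  set g : ℕ → Fin N → ℝ := fun k z => α ^ k * (C ^ k) y z with hg
  have hfnn : ∀ k z, 0 ≤ f k z := fun k z => mul_nonneg (by positivity) (hknn k x z)
  have hgnn : ∀ k z, 0 ≤ g k z := fun k z => mul_nonneg (by positivity) (hknn k y z)
  have hfle : ∀ k z, f k z ≤ q ^ k := by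
    intro k z
    calc f k z ≤ α ^ k * R ^ k :=
          mul_le_mul_of_nonneg_left (hent k x z) (by positivity)
      _ = q ^ k := by rw [← mul_pow, hαR]
  have hgle : ∀ k z, g k z ≤ q ^ k := by
    intro k z
    calc g k z ≤ α ^ k * R ^ k :=
          mul_le_mul_of_nonneg_left (hent k y z) (by positivity)
      _ = q ^ k := by rw [← mul_pow, hαR]
  have hqsum : Summable fun k : ℕ => q ^ k := summable_geometric_of_lt_one hq0.le hq1
  have hsf : ∀ z, Summable fun k => f k z := fun z =>
    hqsum.of_nonneg_of_le (fun k => hfnn k z) (fun k => hfle k z)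
  have hsg : ∀ z, Summable fun k => g k z := fun z =>
    hqsum.of_nonneg_of_le (fun k => hgnn k z) (fun k => hgle k z)
  have hsfn : ∀ z, Summable fun k => ‖f k z‖ := by
    intro z
    simpa [Real.norm_of_nonneg (hfnn _ z)] using hsf z
  have hsgn : ∀ z, Summable fun k => ‖g k z‖ := by
    intro z
    simpa [Real.norm_of_nonneg (hgnn _ z)] using hsg z
  -- per z product formula
  have hprod : ∀ z, (∑' k : ℕ, f k z) * (∑' k : ℕ, g k z)
      = ∑' p : ℕ × ℕ, f p.1 z * g p.2 z := fun z =>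
    tsum_mul_tsum_of_summable_norm (hsfn z) (hsgn z)
  -- summability of product family per z
  have hsp : ∀ z, Summable fun p : ℕ × ℕ => f p.1 z * g p.2 z := fun z =>
    (hsf z).mul_of_nonneg (hsg z) (fun k => hfnn k z) (fun k => hgnn k z)
  -- majorant
  have hssum : Summable fun k : ℕ => s ^ k := summable_geometric_of_lt_one hs0.le hs1
  have hGsum : Summable fun p : ℕ × ℕ => s ^ d * (s ^ p.1 * s ^ p.2) :=
    (hssum.mul_of_nonneg hssum (fun k => by positivity) (fun k => by positivity)).mul_left _
  -- key bound on F p := ∑ z, f p.1 z * g p.2 z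
  have hFle : ∀ p : ℕ × ℕ, (∑ z, f p.1 z * g p.2 z) ≤ s ^ d * (s ^ p.1 * s ^ p.2) := by
    intro ⟨k, r⟩
    by_cases hd : k + r < d
    · have : ∀ z, f k z * g r z = 0 := by
        intro z
        simp only [hf, hg]
        rw [mul_mul_mul_comm, h0 k r hd z, mul_zero]
      simp only [this, Finset.sum_const_zero]
      positivity
    · push_neg at hd
      calc (∑ z, f k z * g r z) ≤ ∑ z, f k z * q ^ r :=
            Finset.sum_le_sum fun z _ =>
              mul_le_mul_of_nonneg_left (hgle r z) (hfnn k z)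
        _ = (∑ z, f k z) * q ^ r := by rw [Finset.sum_mul]
        _ ≤ q ^ k * q ^ r := by
            refine mul_le_mul_of_nonneg_right ?_ (by positivity)
            calc (∑ z, f k z) = α ^ k * ∑ z, (C ^ k) x z := by
                  simp [hf, Finset.mul_sum]
              _ ≤ α ^ k * R ^ k :=
                  mul_le_mul_of_nonneg_left (hkrow k x) (by positivity)
              _ = q ^ k := by rw [← mul_pow, hαR]
        _ = q ^ (k + r) := by rw [pow_add]
        _ = s ^ (2 * (k + r)) := by rw [pow_mul, hssq]
        _ ≤ s ^ (d + (k + r)) := by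
            apply pow_le_pow_of_le_one hs0.le hs1.le
            omega
        _ = s ^ d * (s ^ k * s ^ r) := by rw [pow_add, pow_add]
  -- swap finite sum and tsum
  have hswap : (∑ z, (∑' k : ℕ, f k z) * (∑' k : ℕ, g k z))
      = ∑' p : ℕ × ℕ, ∑ z, f p.1 z * g p.2 z := by
    simp_rw [hprod]
    exact (Summable.tsum_finsetSum fun z _ => hsp z).symm
  have hFnn : ∀ p : ℕ × ℕ, 0 ≤ ∑ z, f p.1 z * g p.2 z := fun p =>
    Finset.sum_nonneg fun z _ => mul_nonneg (hfnn _ z) (hgnn _ z)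
  have hFsum : Summable fun p : ℕ × ℕ => ∑ z, f p.1 z * g p.2 z :=
    hGsum.of_nonneg_of_le hFnn hFle
  have hGval : (∑' p : ℕ × ℕ, s ^ d * (s ^ p.1 * s ^ p.2)) = (1 - s)⁻¹ ^ 2 * s ^ d := by
    rw [tsum_mul_left]
    have hn : Summable fun k : ℕ => ‖s ^ k‖ := by
      simpa [Real.norm_of_nonneg (pow_nonneg hs0.le _)] using hssum
    have := (tsum_mul_tsum_of_summable_norm hn hn (f := fun k : ℕ => s ^ k)
      (g := fun k : ℕ => s ^ k)).symm
    rw [this, tsum_geometric_of_lt_one hs0.le hs1]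
    ring
  calc (∑ z, (∑' k : ℕ, f k z) * (∑' k : ℕ, g k z))
      = ∑' p : ℕ × ℕ, ∑ z, f p.1 z * g p.2 z := hswap
    _ ≤ ∑' p : ℕ × ℕ, s ^ d * (s ^ p.1 * s ^ p.2) := Summable.tsum_le_tsum hFle hFsum hGsum
    _ = (1 - s)⁻¹ ^ 2 * s ^ d := hGval
end

section
/- Let U₁, U₂ be real random variables and let C be a random variable taking finitely many values c₁, ..., c_M with P(C = c_i) > 0, such that the conditional distribution of U₂ given C = c_i is the same for all i (i.e., U₂ is independent of C). Then the β-mixing coefficient satisfies β(σ(U₁), σ(U₂)) ≤ Σ_{i=1}^M P(C = c_i) · β_i, where β_i is the β-mixing coefficient between U₁ and U₂ computed under the conditional probability P(· | C = c_i). -/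
open MeasureTheory ProbabilityTheory

/-- The β-mixing coefficient between the σ-algebras generated by `X` and `Y`:
the supremum over measurable sets `C` of the product space of the difference between
the joint law of `(X, Y)` and the product of the marginal laws. -/
noncomputable def betaMix {Ω α β : Type*} [MeasurableSpace Ω] [MeasurableSpace α]
    [MeasurableSpace β] (P : Measure Ω) (X : Ω → α) (Y : Ω → β) : ℝ :=
  ⨆ C : {s : Set (α × β) // MeasurableSet s},
    |(P.map (fun ω => (X ω, Y ω)) C.1).toReal -
      ((P.map X).prod (P.map Y) C.1).toReal|

theorem stmt18 {Ω : Type*} [MeasurableSpace Ω] (P : Measure Ω) [IsProbabilityMeasure P]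
    (M : ℕ) (hM : 0 < M) (U₁ U₂ : Ω → ℝ) (C : Ω → Fin M)
    (hU₁ : Measurable U₁) (hU₂ : Measurable U₂) (hC : Measurable C)
    (hpos : ∀ i : Fin M, 0 < P (C ⁻¹' {i}))
    (hsame : ∀ i : Fin M, (P[|C ⁻¹' {i}]).map U₂ = P.map U₂) :
    betaMix P U₁ U₂ ≤
      ∑ i : Fin M, (P (C ⁻¹' {i})).toReal * betaMix (P[|C ⁻¹' {i}]) U₁ U₂ := by
  classical
  have hmpair : Measurable fun ω => (U₁ ω, U₂ ω) := hU₁.prodMk hU₂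
  set p : Fin M → ENNReal := fun i => P (C ⁻¹' {i}) with hpdef
  set Q : Fin M → Measure Ω := fun i => P[|C ⁻¹' {i}] with hQdef
  have hmeasC : ∀ i : Fin M, MeasurableSet (C ⁻¹' {i}) :=
    fun i => hC (measurableSet_singleton i)
  have hne : ∀ i, p i ≠ 0 := fun i => (hpos i).ne'
  have hfin : ∀ i, p i ≠ ⊤ := fun i => (measure_lt_top P _).ne
  haveI hQi : ∀ i, IsProbabilityMeasure (Q i) := fun i =>
    cond_isProbabilityMeasure (hne i)
  haveI : IsProbabilityMeasure (P.map U₂) := Measure.isProbabilityMeasure_map hU₂.aemeasurable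
  haveI : IsProbabilityMeasure (P.map U₁) := Measure.isProbabilityMeasure_map hU₁.aemeasurable
  haveI hQ1 : ∀ i, IsProbabilityMeasure ((Q i).map U₁) := fun i =>
    Measure.isProbabilityMeasure_map hU₁.aemeasurable
  haveI hQ2 : ∀ i, IsProbabilityMeasure ((Q i).map U₂) := fun i =>
    Measure.isProbabilityMeasure_map hU₂.aemeasurable
  -- decomposition of P
  have hdecomp : ∀ (A : Set Ω), MeasurableSet A → P A = ∑ i, p i * Q i A := by
    intro A hA
    have h1 : ∀ i, p i * Q i A = P (C ⁻¹' {i} ∩ A) := by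
      intro i
      rw [hQdef, cond_apply (hmeasC i), ← mul_assoc,
        ENNReal.mul_inv_cancel (hne i) (hfin i), one_mul]
    simp_rw [h1]
    have hA' : A = ⋃ i, C ⁻¹' {i} ∩ A := by
      ext x; simp
    rw [show P A = P (⋃ i, C ⁻¹' {i} ∩ A) from by rw [← hA'],
      measure_iUnion ?_ (fun i => (hmeasC i).inter hA), tsum_fintype]
    intro i j hij
    simp only [Set.disjoint_left]
    rintro x ⟨hx1, -⟩ ⟨hx2, -⟩
    exact hij (by simpa using hx1.symm.trans hx2)
  -- joint measure decomposition
  have hjoint : ∀ s : Set (ℝ × ℝ), MeasurableSet s →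
      P.map (fun ω => (U₁ ω, U₂ ω)) s
        = ∑ i, p i * (Q i).map (fun ω => (U₁ ω, U₂ ω)) s := by
    intro s hs
    rw [Measure.map_apply hmpair hs]
    simp_rw [Measure.map_apply hmpair hs]
    exact hdecomp _ (hmpair hs)
  -- marginal decomposition
  have hmarg1 : P.map U₁ = ∑ i, p i • (Q i).map U₁ := by
    refine Measure.ext fun A hA => ?_
    rw [Measure.map_apply hU₁ hA, Measure.finset_sum_apply]
    simp_rw [Measure.smul_apply, smul_eq_mul, Measure.map_apply hU₁ hA]
    exact hdecomp _ (hU₁ hA)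
  -- product measure decomposition
  have hprod : ∀ s : Set (ℝ × ℝ), MeasurableSet s →
      (P.map U₁).prod (P.map U₂) s
        = ∑ i, p i * ((Q i).map U₁).prod ((Q i).map U₂) s := by
    intro s hs
    have : ∀ i, ((Q i).map U₁).prod ((Q i).map U₂) s
        = ∫⁻ x, (P.map U₂) (Prod.mk x ⁻¹' s) ∂((Q i).map U₁) := by
      intro i
      rw [Measure.prod_apply hs]
      simp only [hQdef]
      rw [hsame i]
    simp_rw [this]
    rw [Measure.prod_apply hs, hmarg1, lintegral_finset_sum_measure]
    simp only [lintegral_smul_measure, smul_eq_mul]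
  -- bounds for each term of betaMix
  have habs_le_one : ∀ (R : Measure Ω), IsProbabilityMeasure R →
      ∀ s : {s : Set (ℝ × ℝ) // MeasurableSet s},
      |(R.map (fun ω => (U₁ ω, U₂ ω)) s.1).toReal
        - ((R.map U₁).prod (R.map U₂) s.1).toReal| ≤ 1 := by
    intro R hR s
    haveI := hR
    haveI : IsProbabilityMeasure (R.map U₁) := Measure.isProbabilityMeasure_map hU₁.aemeasurable
    haveI : IsProbabilityMeasure (R.map U₂) := Measure.isProbabilityMeasure_map hU₂.aemeasurable
    haveI : IsProbabilityMeasure (R.map (fun ω => (U₁ ω, U₂ ω))) :=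
      Measure.isProbabilityMeasure_map hmpair.aemeasurable
    have h1 : (R.map (fun ω => (U₁ ω, U₂ ω)) s.1).toReal ≤ 1 := by
      have := prob_le_one (μ := R.map (fun ω => (U₁ ω, U₂ ω))) (s := s.1)
      exact ENNReal.toReal_le_of_le_ofReal zero_le_one (by simpa using this)
    have h2 : ((R.map U₁).prod (R.map U₂) s.1).toReal ≤ 1 := by
      have := prob_le_one (μ := (R.map U₁).prod (R.map U₂)) (s := s.1)
      exact ENNReal.toReal_le_of_le_ofReal zero_le_one (by simpa using this)
    have h3 : (0:ℝ) ≤ (R.map (fun ω => (U₁ ω, U₂ ω)) s.1).toReal := ENNReal.toReal_nonneg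
    have h4 : (0:ℝ) ≤ ((R.map U₁).prod (R.map U₂) s.1).toReal := ENNReal.toReal_nonneg
    rw [abs_sub_le_iff]; constructor <;> linarith
  have hbdd : ∀ i, BddAbove (Set.range fun s : {s : Set (ℝ × ℝ) // MeasurableSet s} =>
      |((Q i).map (fun ω => (U₁ ω, U₂ ω)) s.1).toReal
        - (((Q i).map U₁).prod ((Q i).map U₂) s.1).toReal|) := by
    intro i
    exact ⟨1, by rintro x ⟨s, rfl⟩; exact habs_le_one (Q i) (hQi i) s⟩
  haveI : Nonempty {s : Set (ℝ × ℝ) // MeasurableSet s} := ⟨⟨∅, MeasurableSet.empty⟩⟩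
  refine ciSup_le fun s => ?_
  obtain ⟨s, hs⟩ := s
  have hja : ∀ i, (Q i).map (fun ω => (U₁ ω, U₂ ω)) s ≠ ⊤ := fun i =>
    (measure_lt_top _ _).ne
  have hpb : ∀ i, ((Q i).map U₁).prod ((Q i).map U₂) s ≠ ⊤ := fun i =>
    (measure_lt_top _ _).ne
  have e1 : (P.map (fun ω => (U₁ ω, U₂ ω)) s).toReal
      = ∑ i, (p i).toReal * ((Q i).map (fun ω => (U₁ ω, U₂ ω)) s).toReal := by
    rw [hjoint s hs, ENNReal.toReal_sum (fun i _ =>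
      ENNReal.mul_ne_top (hfin i) (hja i))]
    simp_rw [ENNReal.toReal_mul]
  have e2 : ((P.map U₁).prod (P.map U₂) s).toReal
      = ∑ i, (p i).toReal * (((Q i).map U₁).prod ((Q i).map U₂) s).toReal := by
    rw [hprod s hs, ENNReal.toReal_sum (fun i _ =>
      ENNReal.mul_ne_top (hfin i) (hpb i))]
    simp_rw [ENNReal.toReal_mul]
  rw [e1, e2, ← Finset.sum_sub_distrib]
  refine (Finset.abs_sum_le_sum_abs _ _).trans ?_
  refine Finset.sum_le_sum fun i _ => ?_
  rw [← mul_sub, abs_mul, abs_of_nonneg ENNReal.toReal_nonneg]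
  refine mul_le_mul_of_nonneg_left ?_ ENNReal.toReal_nonneg
  exact le_ciSup (hbdd i) (⟨s, hs⟩ : {s : Set (ℝ × ℝ) // MeasurableSet s})
end
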